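/- Let E = EuclideanSpace ℝ (Fin n), μ a Borel probability measure on E satisfying the standing integrability assumption, and u ∈ E. Let (X_i)_{i∈ℕ} be independent, identically distributed E-valued random variables with law μ on a probability space (Ω, P), and let L ⊆ E be compact. Then for P-almost every ω, sup_{p ∈ L} | (1/N) ∑_{i=0}^{N−1} ρ_u(X_i(ω), p) − G_u(p) | → 0 as N → ∞. (Euclidean case of Lemma 4.1: uniform strong law of large numbers on compacta.) -/

import Mathlib

open MeasureTheory Filter Topology

/-- The data-based geometric quantile loss in Euclidean space:
`ρ_u(x,p) = ‖p − x‖ − ⟪u, p − x⟫`. -/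
noncomputable def quantileLoss {n : ℕ} (u x p : EuclideanSpace ℝ (Fin n)) : ℝ :=
  ‖p - x‖ - inner ℝ u (p - x)

/-!
For each fixed `p` the strong law of large numbers gives almost sure convergence of the empirical
loss to `G_u(p)`, and a countable dense set of points `p` costs only countably many null sets.
Every empirical loss, and `G_u` itself, is `(1 + ‖u‖)`-Lipschitz in `p`; for an equicontinuous
family, pointwise convergence on a dense set to a continuous limit is uniform on compact sets
(Arzelà–Ascoli). Integrability of every `ρ_u(·, p)` comes from
`(1 - ‖u₀‖) ‖p₀ - x‖ ≤ ρ_{u₀}(x, p₀)`, which gives `μ` a finite first moment.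
-/

open ProbabilityTheory Finset
open scoped NNReal

theorem LipschitzWith.integral {α X : Type*} [MeasurableSpace α] [PseudoMetricSpace X]
    {ν : Measure α} [IsProbabilityMeasure ν] {K : ℝ≥0} {f : α → X → ℝ}
    (hf : ∀ a, LipschitzWith K (f a)) (hint : ∀ p, Integrable (f · p) ν) :
    LipschitzWith K fun p => ∫ a, f a p ∂ν := by
  refine LipschitzWith.of_dist_le_mul fun p q => ?_
  rw [Real.dist_eq, ← Real.norm_eq_abs, ← integral_sub (hint p) (hint q)]
  have hbound : ∀ a, ‖f a p - f a q‖ ≤ K * dist p q := fun a =>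
    (Real.dist_eq _ _ ▸ (hf a).dist_le_mul p q :)
  simpa only [probReal_univ, mul_one] using
    norm_integral_le_of_norm_le_const (μ := ν) (Eventually.of_forall hbound)

theorem LipschitzWith.average_range {X : Type*} [PseudoMetricSpace X] {K : ℝ≥0}
    {f : ℕ → X → ℝ} (hf : ∀ i, LipschitzWith K (f i)) (N : ℕ) :
    LipschitzWith K fun p => (N : ℝ)⁻¹ * ∑ i ∈ range N, f i p := by
  refine LipschitzWith.of_dist_le_mul fun p q => ?_
  have hsum : |∑ i ∈ range N, (f i p - f i q)| ≤ N * (K * dist p q) :=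
    calc |∑ i ∈ range N, (f i p - f i q)| ≤ ∑ i ∈ range N, |f i p - f i q| :=
          abs_sum_le_sum_abs _ _
      _ ≤ ∑ _i ∈ range N, K * dist p q :=
          sum_le_sum fun i _ => (Real.dist_eq _ _).symm.trans_le ((hf i).dist_le_mul p q)
      _ = N * (K * dist p q) := by simp
  rw [Real.dist_eq, ← mul_sub, ← sum_sub_distrib, abs_mul, abs_inv, Nat.abs_cast]
  rcases N.eq_zero_or_pos with rfl | hN
  · simp only [CharP.cast_eq_zero, inv_zero, zero_mul]; positivity
  · rwa [inv_mul_le_iff₀ (by positivity)]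

theorem Equicontinuous.tendstoUniformlyOn_of_tendsto_dense {ι X α : Type*}
    [TopologicalSpace X] [UniformSpace α] {l : Filter ι} {F : ι → X → α} {f : X → α}
    {D K : Set X} (hF : Equicontinuous F) (hf : Continuous f) (hD : Dense D) (hK : IsCompact K)
    (h : ∀ x ∈ D, Tendsto (F · x) l (𝓝 (f x))) : TendstoUniformlyOn F f l K := by
  have hpt : ∀ x, Tendsto (F · x) l (𝓝 (f x)) := fun x =>
    closure_minimal h (hF.isClosed_setOfPred_tendsto hf) (hD.closure_eq ▸ Set.mem_univ x)
  have : CompactSpace K := isCompact_iff_compactSpace.mp hK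
  rw [tendstoUniformlyOn_iff_restrict]
  exact UniformFun.tendsto_iff_tendstoUniformly.mp <|
    ((equicontinuous_restrict_iff F).mpr (hF.equicontinuousOn K)).tendsto_uniformFun_iff_pi _ _
      |>.mpr (tendsto_pi_nhds.mpr fun x => hpt x)

theorem ProbabilityTheory.strong_law_ae_comp {Ω E : Type*} [MeasurableSpace Ω]
    [MeasurableSpace E] {P : Measure Ω} {μ : Measure E} {X : ℕ → Ω → E}
    (hX : ∀ i, AEMeasurable (X i) P) (hindep : Pairwise fun i j => IndepFun (X i) (X j) P)
    (hlaw : ∀ i, P.map (X i) = μ) {f : E → ℝ} (hf : Measurable f) (hfint : Integrable f μ) :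
    ∀ᵐ ω ∂P, Tendsto (fun N : ℕ => (N : ℝ)⁻¹ * ∑ i ∈ range N, f (X i ω)) atTop
      (𝓝 (∫ x, f x ∂μ)) := by
  have hident : ∀ i, IdentDistrib (f ∘ X i) (f ∘ X 0) P P := fun i =>
    (IdentDistrib.mk (hX i) (hX 0) (by rw [hlaw, hlaw])).comp hf
  have hint₀ : Integrable (f ∘ X 0) P := by
    rwa [← integrable_map_measure (by rw [hlaw]; exact hf.aestronglyMeasurable) (hX 0), hlaw]
  have hmean : ∫ ω, f (X 0 ω) ∂P = ∫ x, f x ∂μ := by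
    rw [← hlaw 0, integral_map (hX 0) (by rw [hlaw]; exact hf.aestronglyMeasurable)]
  simpa [hmean] using strong_law_ae (fun i => f ∘ X i) hint₀
    (fun i j hij => (hindep hij).comp hf hf) hident

section QuantileLoss

variable {n : ℕ}

theorem lipschitzWith_quantileLoss (u x : EuclideanSpace ℝ (Fin n)) :
    LipschitzWith (1 + ‖u‖₊) (quantileLoss u x) := by
  have hsub : LipschitzWith 1 fun p : EuclideanSpace ℝ (Fin n) => p - x :=
    (IsometryEquiv.subRight x).isometry.lipschitz
  have hinner : LipschitzWith ‖u‖₊ fun p => inner ℝ u (p - x) :=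
    LipschitzWith.of_dist_le_mul fun p q => by
      rw [Real.dist_eq, ← inner_sub_right, sub_sub_sub_cancel_right, dist_eq_norm]
      exact abs_real_inner_le_norm u (p - q)
  exact (lipschitzWith_one_norm.comp hsub).sub hinner |>.weaken (by simp)

theorem continuous_quantileLoss_left (u p : EuclideanSpace ℝ (Fin n)) :
    Continuous fun x => quantileLoss u x p := by
  unfold quantileLoss; fun_prop

theorem mul_norm_sub_le_quantileLoss (u x p : EuclideanSpace ℝ (Fin n)) :
    (1 - ‖u‖) * ‖p - x‖ ≤ quantileLoss u x p := by
  have := real_inner_le_norm u (p - x)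
  rw [quantileLoss]; linarith

variable {μ : Measure (EuclideanSpace ℝ (Fin n))} [IsFiniteMeasure μ]

theorem integrable_id_of_integrable_quantileLoss {u p : EuclideanSpace ℝ (Fin n)}
    (hu : ‖u‖ < 1) (h : Integrable (fun x => quantileLoss u x p) μ) : Integrable id μ := by
  have hnorm : Integrable (fun x => ‖p - x‖) μ := by
    refine (h.const_mul (1 - ‖u‖)⁻¹).mono' (by fun_prop) (Eventually.of_forall fun x => ?_)
    rw [norm_norm, ← div_eq_inv_mul, le_div_iff₀' (by linarith)]
    exact mul_norm_sub_le_quantileLoss u x p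
  have hsub : Integrable (fun x => p - x) μ := (integrable_norm_iff (by fun_prop)).mp hnorm
  exact ((integrable_const p).sub hsub).congr (Eventually.of_forall fun x => by simp)

theorem integrable_quantileLoss (h : Integrable id μ) (u p : EuclideanSpace ℝ (Fin n)) :
    Integrable (fun x => quantileLoss u x p) μ :=
  have hsub : Integrable (fun x => p - x) μ := (integrable_const p).sub h
  hsub.norm.sub (hsub.const_inner u)

end QuantileLoss

theorem uniform_slln_quantileLoss_general
    {n : ℕ} (μ : Measure (EuclideanSpace ℝ (Fin n))) [IsProbabilityMeasure μ]
    (hμint : ∃ (u₀ p₀ : EuclideanSpace ℝ (Fin n)), ‖u₀‖ < 1 ∧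
      Integrable (fun x => quantileLoss u₀ x p₀) μ)
    (u : EuclideanSpace ℝ (Fin n))
    {Ω : Type*} [MeasurableSpace Ω] (P : Measure Ω)
    (X : ℕ → Ω → EuclideanSpace ℝ (Fin n))
    (hXmeas : ∀ i, Measurable (X i))
    (hXindep : ProbabilityTheory.iIndepFun X P)
    (hXlaw : ∀ i, P.map (X i) = μ)
    (L : Set (EuclideanSpace ℝ (Fin n))) (hL : IsCompact L) :
    ∀ᵐ ω ∂P, TendstoUniformlyOn
      (fun (N : ℕ) (p : EuclideanSpace ℝ (Fin n)) =>
        (N : ℝ)⁻¹ * ∑ i ∈ Finset.range N, quantileLoss u (X i ω) p)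
      (fun p => ∫ x, quantileLoss u x p ∂μ) atTop L := by
  obtain ⟨u₀, p₀, hu₀, h₀⟩ := hμint
  have hint := integrable_quantileLoss (integrable_id_of_integrable_quantileLoss hu₀ h₀) u
  obtain ⟨D, hDcount, hD⟩ :=
    TopologicalSpace.exists_countable_dense (EuclideanSpace ℝ (Fin n))
  have hslln : ∀ᵐ ω ∂P, ∀ p ∈ D, Tendsto
      (fun N : ℕ => (N : ℝ)⁻¹ * ∑ i ∈ range N, quantileLoss u (X i ω) p) atTop
      (𝓝 (∫ x, quantileLoss u x p ∂μ)) :=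
    (ae_ball_iff hDcount).2 fun p _ => strong_law_ae_comp (fun i => (hXmeas i).aemeasurable)
      (fun _ _ hij => hXindep.indepFun hij) hXlaw (continuous_quantileLoss_left u p).measurable
      (hint p)
  filter_upwards [hslln] with ω hω
  have hequi := LipschitzWith.uniformEquicontinuous _ _ fun N =>
    LipschitzWith.average_range (fun i => lipschitzWith_quantileLoss u (X i ω)) N
  exact hequi.equicontinuous.tendstoUniformlyOn_of_tendsto_dense
    (LipschitzWith.integral (lipschitzWith_quantileLoss u) hint).continuous hD hL hω

/-- Euclidean case of Lemma 4.1: uniform strong law of large numbers for the empirical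
quantile loss over any compact set `L`. -/
theorem uniform_slln_quantileLoss
    {n : ℕ} (μ : Measure (EuclideanSpace ℝ (Fin n))) [IsProbabilityMeasure μ]
    (hμint : ∃ (u₀ p₀ : EuclideanSpace ℝ (Fin n)), ‖u₀‖ < 1 ∧
      Integrable (fun x => quantileLoss u₀ x p₀) μ)
    (u : EuclideanSpace ℝ (Fin n))
    {Ω : Type*} [MeasurableSpace Ω] (P : Measure Ω) [IsProbabilityMeasure P]
    (X : ℕ → Ω → EuclideanSpace ℝ (Fin n))
    (hXmeas : ∀ i, Measurable (X i))
    (hXindep : ProbabilityTheory.iIndepFun X P)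
    (hXlaw : ∀ i, P.map (X i) = μ)
    (L : Set (EuclideanSpace ℝ (Fin n))) (hL : IsCompact L) :
    ∀ᵐ ω ∂P, TendstoUniformlyOn
      (fun (N : ℕ) (p : EuclideanSpace ℝ (Fin n)) =>
        (N : ℝ)⁻¹ * ∑ i ∈ Finset.range N, quantileLoss u (X i ω) p)
      (fun p => ∫ x, quantileLoss u x p ∂μ) atTop L :=
  uniform_slln_quantileLoss_general μ hμint u P X hXmeas hXindep hXlaw L hL
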